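/- arXiv:0806.4973 — 3 statements merged into one kernel-verified Lean document; each statement's English description precedes it below -/
import Mathlib

section
/- Let A be a complex Banach algebra and let μ ∈ A*. Define R_μ, L_μ : A → A* by (R_μ a)(b) = μ(ba) and (L_μ a)(b) = μ(ab). Then R_μ is a compact operator if and only if L_μ is a compact operator. -/
/-!
Since `L_μ a b = μ (a * b) = R_μ b a`, each of `L_μ`, `R_μ` is the transpose of the other, so
(up to the embedding `A → A**`) the claim is Schauder's theorem; it is proved directly for any
`L : E → F*`, `R : F → E*` with `L a b = R b a`. On the compact set
`K = closure (R '' closedBall 0 1) ⊆ E*`, the functions `φ ↦ φ a` with `‖a‖ ≤ 1` are uniformly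
bounded and `1`-Lipschitz, hence relatively compact in `K →ᵇ 𝕜` by Arzelà–Ascoli. Since
`‖L a - L a'‖ = sup_{‖b‖ ≤ 1} |R b (a - a')|` is dominated by their uniform distance,
`L '' closedBall 0 1` is totally bounded.
-/

open Metric Set BoundedContinuousFunction

theorem TotallyBounded.image_of_dist_le {α β γ : Type*} [PseudoMetricSpace α]
    [PseudoMetricSpace β] {f : γ → α} {g : γ → β} {s : Set γ} (hg : TotallyBounded (g '' s))
    (h : ∀ x ∈ s, ∀ y ∈ s, dist (f x) (f y) ≤ dist (g x) (g y)) :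
    TotallyBounded (f '' s) := by
  refine Metric.totallyBounded_iff.2 fun ε hε => ?_
  obtain ⟨u, hus, huf, hcover⟩ :=
    exists_subset_image_finite_and.1 (Metric.finite_approx_of_totallyBounded hg ε hε)
  refine ⟨f '' u, huf.image f, ?_⟩
  rintro _ ⟨a, ha, rfl⟩
  obtain ⟨_, ⟨x, hx, rfl⟩, hax⟩ := mem_iUnion₂.1 (hcover (mem_image_of_mem g ha))
  exact mem_iUnion₂.2 ⟨f x, mem_image_of_mem f hx, (h a ha x (hus hx)).trans_lt hax⟩

namespace StrongDual

variable {𝕜 E F : Type*} [RCLike 𝕜] [NormedAddCommGroup E] [NormedSpace 𝕜 E]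
  [NormedAddCommGroup F] [NormedSpace 𝕜 F]

noncomputable def evalOn (K : Set (StrongDual 𝕜 E)) [CompactSpace K] (a : E) : K →ᵇ 𝕜 :=
  mkOfCompact ⟨fun φ => (φ : StrongDual 𝕜 E) a, by fun_prop⟩

@[simp]
theorem evalOn_apply (K : Set (StrongDual 𝕜 E)) [CompactSpace K] (a : E) (φ : K) :
    evalOn K a φ = (φ : StrongDual 𝕜 E) a :=
  rfl

theorem isCompact_closure_evalOn_image_closedBall (K : Set (StrongDual 𝕜 E)) [CompactSpace K] :
    IsCompact (closure (evalOn K '' closedBall 0 1)) := by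
  obtain ⟨C, hC0, hC⟩ := (isCompact_iff_compactSpace.2 ‹_›).isBounded.exists_pos_norm_le
  refine arzela_ascoli (closedBall 0 C) (isCompact_closedBall 0 C) _ ?_ ?_
  · rintro _ φ ⟨a, ha, rfl⟩
    rw [mem_closedBall_zero_iff] at ha ⊢
    calc ‖(φ : StrongDual 𝕜 E) a‖ ≤ ‖(φ : StrongDual 𝕜 E)‖ * ‖a‖ :=
          ContinuousLinearMap.le_opNorm _ a
      _ ≤ C * 1 := mul_le_mul (hC _ φ.2) ha (norm_nonneg a) hC0.le
      _ = C := mul_one C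
  · refine (LipschitzWith.uniformEquicontinuous _ 1 fun f => ?_).equicontinuous
    obtain ⟨a, ha, hfa⟩ := f.2
    rw [← hfa]
    refine LipschitzWith.of_dist_le_mul fun φ ψ => ?_
    rw [mem_closedBall_zero_iff] at ha
    calc dist ((φ : StrongDual 𝕜 E) a) ((ψ : StrongDual 𝕜 E) a)
        = ‖((φ : StrongDual 𝕜 E) - ψ) a‖ := by rw [dist_eq_norm]; rfl
      _ ≤ ‖(φ : StrongDual 𝕜 E) - ψ‖ * ‖a‖ := ContinuousLinearMap.le_opNorm _ a
      _ ≤ dist φ ψ * 1 := by rw [← dist_eq_norm]; gcongr; rfl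
      _ = _ := by simp

theorem dist_le_dist_evalOn {K : Set (StrongDual 𝕜 E)} [CompactSpace K]
    {L : E → StrongDual 𝕜 F} {R : F → StrongDual 𝕜 E} (h : ∀ a b, L a b = R b a)
    (hRK : MapsTo R (closedBall 0 1) K) (a a' : E) :
    dist (L a) (L a') ≤ dist (evalOn K a) (evalOn K a') := by
  rw [dist_eq_norm]
  refine ContinuousLinearMap.opNorm_le_of_unit_norm dist_nonneg fun b hb => ?_
  have hRb : R b ∈ K := hRK (mem_closedBall_zero_iff.2 hb.le)
  calc ‖(L a - L a') b‖ = dist (evalOn K a ⟨R b, hRb⟩) (evalOn K a' ⟨R b, hRb⟩) := by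
        rw [dist_eq_norm, evalOn_apply, evalOn_apply, ← h, ← h]; rfl
    _ ≤ _ := dist_coe_le_dist _

theorem isCompact_closure_image_closedBall_of_transpose {L : E → StrongDual 𝕜 F}
    {R : F → StrongDual 𝕜 E} (h : ∀ a b, L a b = R b a)
    (hR : IsCompact (closure (R '' closedBall 0 1))) :
    IsCompact (closure (L '' closedBall 0 1)) := by
  set K := closure (R '' closedBall 0 1)
  have : CompactSpace K := isCompact_iff_compactSpace.1 hR
  have hRK : MapsTo R (closedBall 0 1) K := (mapsTo_image _ _).mono_right subset_closure
  have hΦ : TotallyBounded (evalOn K '' closedBall 0 1) :=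
    (isCompact_closure_evalOn_image_closedBall K).totallyBounded.subset subset_closure
  exact (hΦ.image_of_dist_le fun a _ a' _ => dist_le_dist_evalOn h hRK a a').closure
    |>.isCompact_of_isClosed isClosed_closure

end StrongDual

theorem wap_Rmu_compact_iff_Lmu_compact_general
    {A : Type*} [NormedRing A] [NormedAlgebra ℂ A]
    (μ : StrongDual ℂ A) (L R : A →L[ℂ] StrongDual ℂ A)
    (hL : ∀ a b : A, L a b = μ (a * b)) (hR : ∀ a b : A, R a b = μ (b * a)) :
    IsCompact (closure (R '' Metric.closedBall 0 1)) ↔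
      IsCompact (closure (L '' Metric.closedBall 0 1)) :=
  ⟨StrongDual.isCompact_closure_image_closedBall_of_transpose fun a b => by rw [hL, hR],
    StrongDual.isCompact_closure_image_closedBall_of_transpose fun a b => by rw [hL, hR]⟩

/-- For a complex Banach algebra `A` and `μ ∈ A*`, with `R_μ, L_μ : A → A*` given by
`(R_μ a)(b) = μ(ba)` and `(L_μ a)(b) = μ(ab)`, the operator `R_μ` is compact (the image
of the closed unit ball is relatively norm-compact) if and only if `L_μ` is compact. -/
theorem wap_Rmu_compact_iff_Lmu_compact
    {A : Type*} [NormedRing A] [NormedAlgebra ℂ A] [CompleteSpace A]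
    (μ : StrongDual ℂ A) (L R : A →L[ℂ] StrongDual ℂ A)
    (hL : ∀ a b : A, L a b = μ (a * b)) (hR : ∀ a b : A, R a b = μ (b * a)) :
    IsCompact (closure (R '' Metric.closedBall 0 1)) ↔
      IsCompact (closure (L '' Metric.closedBall 0 1)) :=
  wap_Rmu_compact_iff_Lmu_compact_general μ L R hL hR
end

section
/- Let X be a measure space, E a complex Banach space, π : L¹(X) → B(E) a bounded linear map, and W a bounded linear operator on the Bochner space L²(X, E) such that for all f, g ∈ L²(X), all x ∈ E and all μ ∈ E*: ∫_X f(t) · μ((W(g•x))(t)) dt = μ(π(fg)(x)), where g•x ∈ L²(X, E) denotes the class of t ↦ g(t)x and fg ∈ L¹(X) is the pointwise product. Then the operator norm of π is at most the operator norm of W. -/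
/-!
Factor `h ∈ L¹` as `h = f g` with `|f| = |g| = √|h|`, so that `‖f‖₂ ‖g‖₂ = ‖h‖₁`. The hypothesis
on `W` turns `φ (π h x)` into the `L²` pairing of `f` with `φ ∘ W (g • x)`, and Cauchy–Schwarz
bounds this by `‖f‖₂ ‖φ‖ ‖W‖ ‖x‖ ‖g‖₂ = ‖W‖ ‖h‖₁ ‖x‖ ‖φ‖`.
-/

open MeasureTheory

namespace RCLike

variable {𝕜 : Type*} [RCLike 𝕜]

theorem norm_sqrt_norm (z : 𝕜) : ‖(√‖z‖ : 𝕜)‖ = √‖z‖ := by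
  rw [norm_ofReal, abs_of_nonneg (Real.sqrt_nonneg _)]

theorem norm_div_sqrt_norm (z : 𝕜) : ‖z / (√‖z‖ : 𝕜)‖ = √‖z‖ := by
  rw [norm_div, norm_sqrt_norm, Real.div_sqrt]

theorem div_sqrt_norm_mul_sqrt_norm (z : 𝕜) : z / (√‖z‖ : 𝕜) * (√‖z‖ : 𝕜) = z := by
  rcases eq_or_ne z 0 with rfl | hz
  · simp
  · exact div_mul_cancel₀ z (by simpa using hz)

end RCLike

namespace MeasureTheory.Lp

variable {X : Type*} [MeasurableSpace X] {m : Measure X}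

theorem norm_sq_eq_of_norm_eq_sqrt {E F : Type*} [NormedAddCommGroup E] [NormedAddCommGroup F]
    (g : Lp E 2 m) (h : Lp F 1 m) (hgh : ∀ᵐ t ∂m, ‖g t‖ = √‖h t‖) : ‖g‖ ^ 2 = ‖h‖ := by
  have key : eLpNorm g 2 m ^ (2 : ℝ) = eLpNorm h 1 m := by
    rw [← eLpNorm_norm h]
    convert (eLpNorm_norm_rpow g two_pos (p := 1) (μ := m)).symm using 1
    · norm_num
    · refine eLpNorm_congr_ae ?_
      filter_upwards [hgh] with t ht
      rw [ht, Real.rpow_two, Real.sq_sqrt (norm_nonneg _)]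
  rw [Lp.norm_def, Lp.norm_def, ← key, ← ENNReal.toReal_rpow]
  norm_cast

variable {𝕜 : Type*} [RCLike 𝕜]

theorem exists_smul_eq_and_norm_mul_norm_eq (h : Lp 𝕜 1 m) :
    ∃ f g : Lp 𝕜 2 m, f • g = h ∧ ‖f‖ * ‖g‖ = ‖h‖ := by
  set g : X → 𝕜 := fun t => (√‖h t‖ : 𝕜)
  set f : X → 𝕜 := fun t => h t / g t
  have h_meas := Lp.aestronglyMeasurable h
  have g_meas : AEStronglyMeasurable g m :=
    (by fun_prop : Continuous fun z : 𝕜 => (√‖z‖ : 𝕜)).comp_aestronglyMeasurable h_meas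
  have f_meas : AEStronglyMeasurable f m :=
    (h_meas.aemeasurable.div g_meas.aemeasurable).aestronglyMeasurable
  have g_memLp : MemLp g 2 m := by
    refine (memLp_two_iff_integrable_sq_norm g_meas).2 ?_
    simpa only [g, RCLike.norm_sqrt_norm, Real.sq_sqrt (norm_nonneg _)]
      using (L1.integrable_coeFn h).norm
  have f_norm_eq (t : X) : ‖f t‖ = ‖g t‖ :=
    (RCLike.norm_div_sqrt_norm _).trans (RCLike.norm_sqrt_norm _).symm
  have f_memLp : MemLp f 2 m := g_memLp.of_le f_meas (.of_forall fun t => (f_norm_eq t).le)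
  refine ⟨f_memLp.toLp f, g_memLp.toLp g, ?_, ?_⟩
  · ext1
    filter_upwards [Lp.coeFn_lpSMul (r := 1) (f_memLp.toLp f) (g_memLp.toLp g),
      f_memLp.coeFn_toLp, g_memLp.coeFn_toLp] with t hfg hf hg
    rw [hfg, Pi.smul_apply', hf, hg, smul_eq_mul]
    exact RCLike.div_sqrt_norm_mul_sqrt_norm _
  · have g_norm : ∀ᵐ t ∂m, ‖g_memLp.toLp g t‖ = √‖h t‖ := by
      filter_upwards [g_memLp.coeFn_toLp] with t ht
      rw [ht, RCLike.norm_sqrt_norm]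
    have f_norm : ‖f_memLp.toLp f‖ = ‖g_memLp.toLp g‖ := by
      rw [Lp.norm_toLp, Lp.norm_toLp, eLpNorm_congr_norm_ae (g := g) (.of_forall f_norm_eq)]
    rw [f_norm, ← sq, norm_sq_eq_of_norm_eq_sqrt _ _ g_norm]

theorem norm_integral_mul_le (f g : Lp 𝕜 2 m) : ‖∫ t, f t * g t ∂m‖ ≤ ‖f‖ * ‖g‖ :=
  calc ‖∫ t, f t * g t ∂m‖ = ‖∫ t, (f • g : Lp 𝕜 1 m) t ∂m‖ := by
        rw [integral_congr_ae (Lp.coeFn_lpSMul f g)]; rfl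
    _ ≤ ‖(f • g : Lp 𝕜 1 m)‖ :=
        (norm_integral_le_integral_norm _).trans_eq (L1.norm_eq_integral_norm _).symm
    _ ≤ ‖f‖ * ‖g‖ := Lp.norm_smul_le f g

end MeasureTheory.Lp

theorem norm_pi_le_norm_W_general
    {X : Type*} [MeasurableSpace X] (m : Measure X)
    {E : Type*} [NormedAddCommGroup E] [NormedSpace ℂ E]
    (π : Lp ℂ 1 m →L[ℂ] (E →L[ℂ] E))
    (W : Lp E 2 m →L[ℂ] Lp E 2 m)
    (hW : ∀ (f g : Lp ℂ 2 m) (x : E) (φ : StrongDual ℂ E)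
        (gx : Lp E 2 m) (fg : Lp ℂ 1 m),
      gx =ᵐ[m] (fun t => g t • x) → fg =ᵐ[m] (fun t => f t * g t) →
      ∫ t, f t * φ (W gx t) ∂m = φ (π fg x)) :
    ‖π‖ ≤ ‖W‖ := by
  refine π.opNorm_le_bound (norm_nonneg W) fun h => ?_
  refine (π h).opNorm_le_bound (by positivity) fun x => ?_
  refine NormedSpace.norm_le_dual_bound ℂ _ (by positivity) fun φ => ?_
  obtain ⟨f, g, rfl, hfg⟩ := Lp.exists_smul_eq_and_norm_mul_norm_eq h
  set gx : Lp E 2 m := (ContinuousLinearMap.toSpanSingleton ℂ x).compLp g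
  have hgx : ‖gx‖ ≤ ‖x‖ * ‖g‖ := by
    simpa using (ContinuousLinearMap.toSpanSingleton ℂ x).norm_compLp_le g
  have h_pairing : φ (π (f • g) x) = ∫ t, f t * φ.compLp (W gx) t ∂m := by
    rw [← hW f g x φ gx (f • g) (ContinuousLinearMap.coeFn_compLp _ g) (Lp.coeFn_lpSMul f g)]
    refine integral_congr_ae ?_
    filter_upwards [φ.coeFn_compLp (W gx)] with t ht
    rw [ht]
  calc ‖φ (π (f • g) x)‖ ≤ ‖f‖ * ‖φ.compLp (W gx)‖ := h_pairing ▸ Lp.norm_integral_mul_le _ _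
    _ ≤ ‖f‖ * (‖φ‖ * (‖W‖ * (‖x‖ * ‖g‖))) := by
      gcongr
      exact (φ.norm_compLp_le _).trans (by gcongr; exact W.le_opNorm_of_le hgx)
    _ = ‖W‖ * ‖f • g‖ * ‖x‖ * ‖φ‖ := by rw [← hfg]; ring

/-- Let `X` be a measure space, `E` a complex Banach space, `π : L¹(X) → B(E)` bounded
linear, and `W` a bounded operator on `L²(X, E)` with
`∫ f(t) φ((W(g•x))(t)) dt = φ(π(fg) x)` for all `f, g ∈ L²(X)`, `x ∈ E`, `φ ∈ E*`.
Then `‖π‖ ≤ ‖W‖`. -/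
theorem norm_pi_le_norm_W
    {X : Type*} [MeasurableSpace X] (m : Measure X)
    {E : Type*} [NormedAddCommGroup E] [NormedSpace ℂ E] [CompleteSpace E]
    (π : Lp ℂ 1 m →L[ℂ] (E →L[ℂ] E))
    (W : Lp E 2 m →L[ℂ] Lp E 2 m)
    (hW : ∀ (f g : Lp ℂ 2 m) (x : E) (φ : StrongDual ℂ E)
        (gx : Lp E 2 m) (fg : Lp ℂ 1 m),
      gx =ᵐ[m] (fun t => g t • x) → fg =ᵐ[m] (fun t => f t * g t) →
      ∫ t, f t * φ (W gx t) ∂m = φ (π fg x)) :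
    ‖π‖ ≤ ‖W‖ :=
  norm_pi_le_norm_W_general m π W hW
end

section
/- Let X be a σ-finite measure space and E a complex Banach space. (i) For g ∈ L²(X) and H ∈ L²(X, E), the function (s, t) ↦ g(s)·H(t) defines an element g⊠H of L²(X×X, E) (with the product measure) satisfying ‖g⊠H‖ = ‖g‖·‖H‖. (ii) For every bounded linear operator W on L²(X, E), there exists a unique bounded linear operator W₂₃ on L²(X×X, E) such that W₂₃(g⊠H) = g⊠(W(H)) for all g ∈ L²(X) and H ∈ L²(X, E); moreover the operator norm of W₂₃ equals the operator norm of W. -/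
/-!
The map `(g, H) ↦ g ⊠ H` (`Lp.tensor`) is bilinear, so it factors through the algebraic tensor
product `Lᵖ(μ) ⊗ Lᵖ(ν, E)`. By Fubini, `‖∑ gᵢ ⊠ Hᵢ‖ᵖ = ∫ ‖∑ gᵢ(s) • Hᵢ‖ᵖ ds`; for a single tensor
this is `‖g‖ᵖ ‖H‖ᵖ`, and since `∑ gᵢ(s) • W Hᵢ = W (∑ gᵢ(s) • Hᵢ)` it shows that `id ⊗ W` is
bounded by `‖W‖` for the norm of `Lᵖ(μ × ν, E)`. The image of the tensor product is dense: it
contains the indicators of measurable rectangles of finite measure, and a π-λ argument passes from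
rectangles to all sets of finite measure. Hence `id ⊗ W` extends uniquely to `W₂₃`
(`Lp.lTensor μ W`), and evaluating `W₂₃` on `g ⊠ H` with `g ≠ 0` gives `‖W‖ ≤ ‖W₂₃‖`.
-/

open MeasureTheory
open scoped ENNReal TensorProduct symmDiff

namespace MeasureTheory

section IndicatorSets

variable {α : Type*} [MeasurableSpace α] {μ : Measure α} {E : Type*} [NormedAddCommGroup E]
  {p : ℝ≥0∞}

namespace Lp

def indicatorSetsIn (V : AddSubgroup (Lp E p μ)) : Set (Set α) :=
  {s | ∃ (hs : MeasurableSet s) (hμs : μ s ≠ ∞), ∀ c : E, indicatorConstLp p hs hμs c ∈ V}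

variable {V : AddSubgroup (Lp E p μ)} {s t R : Set α}

theorem empty_mem_indicatorSetsIn : ∅ ∈ indicatorSetsIn V :=
  ⟨.empty, by simp, fun _ ↦ by simp⟩

theorem union_mem_indicatorSetsIn (hs : s ∈ indicatorSetsIn V) (ht : t ∈ indicatorSetsIn V)
    (hst : Disjoint s t) : s ∪ t ∈ indicatorSetsIn V := by
  obtain ⟨hs, hμs, hsV⟩ := hs
  obtain ⟨ht, hμt, htV⟩ := ht
  refine ⟨hs.union ht, by finiteness, fun c ↦ ?_⟩
  rw [indicatorConstLp_disjoint_union hs ht hμs hμt hst]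
  exact V.add_mem (hsV c) (htV c)

theorem diff_mem_indicatorSetsIn (hs : s ∈ indicatorSetsIn V) (ht : t ∈ indicatorSetsIn V)
    (hts : t ⊆ s) : s \ t ∈ indicatorSetsIn V := by
  obtain ⟨hs, hμs, hsV⟩ := hs
  obtain ⟨ht, hμt, htV⟩ := ht
  have hμst : μ (s \ t) ≠ ∞ := ne_top_of_le_ne_top hμs (measure_mono Set.sdiff_subset)
  refine ⟨hs.diff ht, hμst, fun c ↦ ?_⟩
  have h := indicatorConstLp_disjoint_union (p := p) ht (hs.diff ht) hμt hμst
    Set.disjoint_sdiff_right c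
  simp only [Set.union_sdiff_cancel hts] at h
  rw [eq_sub_of_add_eq' h.symm]
  exact V.sub_mem (hsV c) (htV c)

theorem iUnion_mem_indicatorSetsIn [Fact (1 ≤ p)] (hp : p ≠ ∞)
    (hV : IsClosed (V : Set (Lp E p μ)))
    {t : ℕ → Set α} (ht_mono : Monotone t) (ht : ∀ n, t n ∈ indicatorSetsIn V)
    (hμ : μ (⋃ n, t n) ≠ ∞) : ⋃ n, t n ∈ indicatorSetsIn V := by
  have hmeas : ∀ n, MeasurableSet (t n) := fun n ↦ (ht n).1
  refine ⟨.iUnion hmeas, hμ, fun c ↦ ?_⟩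
  have hlim : Filter.Tendsto (fun n ↦ μ (t n ∆ ⋃ n, t n)) Filter.atTop (nhds 0) := by
    have h := tendsto_measure_iInter_atTop (μ := μ)
      (fun n ↦ ((MeasurableSet.iUnion hmeas).diff (hmeas n)).nullMeasurableSet)
      (fun m n hmn ↦ Set.sdiff_subset_sdiff_right (ht_mono hmn))
      ⟨0, ne_top_of_le_ne_top hμ (measure_mono Set.sdiff_subset)⟩
    rw [← Set.sdiff_iUnion, Set.sdiff_self, measure_empty] at h
    simpa only [symmDiff_of_le (Set.subset_iUnion t _), Function.comp_def] using h
  exact hV.mem_of_tendsto (tendsto_indicatorConstLp_set (ht := hmeas) (hμt := fun n ↦ (ht n).2.1)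
    hp hlim) (Filter.Eventually.of_forall fun n ↦ (ht n).2.2 c)

theorem inter_mem_indicatorSetsIn_of_isPiSystem [Fact (1 ≤ p)] (hp : p ≠ ∞)
    (hV : IsClosed (V : Set (Lp E p μ))) {C : Set (Set α)}
    (hgen : ‹MeasurableSpace α› = MeasurableSpace.generateFrom C) (hC : IsPiSystem C)
    (hR : R ∈ indicatorSetsIn V) (hCR : ∀ s ∈ C, s ∩ R ∈ indicatorSetsIn V)
    (hs : MeasurableSet s) : s ∩ R ∈ indicatorSetsIn V := by
  induction s, hs using MeasurableSpace.induction_on_inter hgen hC with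
  | empty => simpa using empty_mem_indicatorSetsIn
  | basic s hs => exact hCR s hs
  | compl s _ hsR =>
    rw [show sᶜ ∩ R = R \ (s ∩ R) by ext; simp [and_comm]]
    exact diff_mem_indicatorSetsIn hR hsR Set.inter_subset_right
  | iUnion f hdisj hf hfR =>
    have hacc : ∀ n, Set.accumulate f n ∩ R ∈ indicatorSetsIn V := by
      intro n
      induction n with
      | zero => simpa [Set.accumulate_zero_nat] using hfR 0
      | succ n ih =>
        rw [Set.accumulate_succ, Set.union_inter_distrib_right]
        exact union_mem_indicatorSetsIn ih (hfR (n + 1))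
          ((Set.disjoint_accumulate hdisj n.lt_succ_self).mono Set.inter_subset_left
            Set.inter_subset_left)
    rw [← Set.iUnion_accumulate, Set.iUnion_inter]
    exact iUnion_mem_indicatorSetsIn hp hV
      (fun m n hmn ↦ Set.inter_subset_inter_left R (Set.monotone_accumulate hmn)) hacc
      (ne_top_of_le_ne_top hR.2.1 (measure_mono (Set.iUnion_subset fun _ ↦ Set.inter_subset_right)))

theorem eq_top_of_forall_mem_indicatorSetsIn [Fact (1 ≤ p)] (hp : p ≠ ∞)
    (hV : IsClosed (V : Set (Lp E p μ)))
    (h : ∀ s, MeasurableSet s → μ s ≠ ∞ → s ∈ indicatorSetsIn V) : V = ⊤ := by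
  refine eq_top_iff.2 fun f _ ↦ Lp.induction hp (· ∈ V) (fun c s hs hμs ↦ ?_)
    (fun _ _ _ _ _ hf hg ↦ V.add_mem hf hg) hV f
  rw [Lp.simpleFunc.coe_indicatorConst]
  exact (h s hs hμs.ne).2.2 c

theorem eq_top_of_prod_mem_indicatorSetsIn {β : Type*} [MeasurableSpace β] {ν : Measure β}
    [SigmaFinite μ] [SigmaFinite ν] [Fact (1 ≤ p)] (hp : p ≠ ∞)
    {V : AddSubgroup (Lp E p (μ.prod ν))} (hV : IsClosed (V : Set (Lp E p (μ.prod ν))))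
    (h : ∀ A B, MeasurableSet A → MeasurableSet B → μ A ≠ ∞ → ν B ≠ ∞ →
      A ×ˢ B ∈ indicatorSetsIn V) : V = ⊤ := by
  -- Complements of sets of finite measure have infinite measure, so the π-λ argument is run
  -- inside the windows `R n`, which exhaust `α × β`.
  set R : ℕ → Set (α × β) := fun n ↦ spanningSets μ n ×ˢ spanningSets ν n
  have hR_mono : Monotone R := fun m n hmn ↦
    Set.prod_mono (monotone_spanningSets μ hmn) (monotone_spanningSets ν hmn)
  have hR_mem : ∀ n, R n ∈ indicatorSetsIn V := fun n ↦
    h _ _ (measurableSet_spanningSets μ n) (measurableSet_spanningSets ν n)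
      (measure_spanningSets_lt_top μ n).ne (measure_spanningSets_lt_top ν n).ne
  have hwindow : ∀ n s, MeasurableSet s → s ∩ R n ∈ indicatorSetsIn V := by
    refine fun n s hs ↦ inter_mem_indicatorSetsIn_of_isPiSystem hp hV generateFrom_prod.symm
      isPiSystem_prod (hR_mem n) ?_ hs
    rintro _ ⟨A, hA, B, hB, rfl⟩
    rw [Set.prod_inter_prod]
    exact h _ _ (hA.inter (measurableSet_spanningSets μ n))
      (hB.inter (measurableSet_spanningSets ν n))
      (ne_top_of_le_ne_top (measure_spanningSets_lt_top μ n).ne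
        (measure_mono Set.inter_subset_right))
      (ne_top_of_le_ne_top (measure_spanningSets_lt_top ν n).ne
        (measure_mono Set.inter_subset_right))
  refine eq_top_of_forall_mem_indicatorSetsIn hp hV fun s hs hμs ↦ ?_
  have hs_eq : s = ⋃ n, s ∩ R n := by
    rw [← Set.inter_iUnion, Set.iUnion_prod_of_monotone (monotone_spanningSets μ)
      (monotone_spanningSets ν), iUnion_spanningSets, iUnion_spanningSets, Set.univ_prod_univ,
      Set.inter_univ]
  rw [hs_eq]
  exact iUnion_mem_indicatorSetsIn hp hV
    (fun m n hmn ↦ Set.inter_subset_inter_right s (hR_mono hmn)) (fun n ↦ hwindow n s hs)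
    (hs_eq ▸ hμs)

end Lp

end IndicatorSets

section Tensor

variable {α β : Type*} [MeasurableSpace α] [MeasurableSpace β]
  {𝕜 : Type*} [NontriviallyNormedField 𝕜] {E : Type*} [NormedAddCommGroup E] [NormedSpace 𝕜 E]
  {p : ℝ≥0∞} {μ : Measure α} {ν : Measure β}

theorem eLpNorm_rpow_prod_eq_lintegral [SFinite ν] (hp0 : p ≠ 0) (hp : p ≠ ∞) {F : α × β → E}
    (hF : AEStronglyMeasurable F (μ.prod ν)) :
    eLpNorm F p (μ.prod ν) ^ p.toReal = ∫⁻ s, eLpNorm (fun t ↦ F (s, t)) p ν ^ p.toReal ∂μ := by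
  have hp' : 0 < p.toReal := ENNReal.toReal_pos hp0 hp
  simp only [eLpNorm_eq_eLpNorm' hp0 hp, ← lintegral_rpow_enorm_eq_rpow_eLpNorm' hp']
  exact lintegral_prod _ (hF.enorm.pow_const _)

theorem eLpNorm_smul_prod [SFinite ν] (hp0 : p ≠ 0) (hp : p ≠ ∞) {g : α → 𝕜} {H : β → E}
    (hg : AEStronglyMeasurable g μ) (hH : AEStronglyMeasurable H ν) :
    eLpNorm (fun q : α × β ↦ g q.1 • H q.2) p (μ.prod ν) = eLpNorm g p μ * eLpNorm H p ν := by
  have hp' : 0 < p.toReal := ENNReal.toReal_pos hp0 hp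
  refine ENNReal.rpow_left_injective hp'.ne' ?_
  dsimp only
  rw [eLpNorm_rpow_prod_eq_lintegral (F := fun q ↦ g q.1 • H q.2) hp0 hp
    (hg.comp_fst.smul hH.comp_snd)]
  simp only [← Pi.smul_def, eLpNorm_const_smul, ENNReal.mul_rpow_of_nonneg _ _ hp'.le]
  rw [lintegral_mul_const'' _ (hg.enorm.pow_const _), eLpNorm_eq_eLpNorm' hp0 hp,
    lintegral_rpow_enorm_eq_rpow_eLpNorm' hp', eLpNorm_eq_eLpNorm' hp0 hp]

theorem MemLp.smul_prod [SFinite ν] (hp0 : p ≠ 0) (hp : p ≠ ∞) {g : α → 𝕜} {H : β → E}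
    (hg : MemLp g p μ) (hH : MemLp H p ν) :
    MemLp (fun q : α × β ↦ g q.1 • H q.2) p (μ.prod ν) := by
  refine ⟨hg.1.comp_fst.smul hH.1.comp_snd, ?_⟩
  rw [eLpNorm_smul_prod hp0 hp hg.1 hH.1]
  exact ENNReal.mul_lt_top hg.2 hH.2

namespace Lp

variable [Fact (1 ≤ p)]

theorem nontrivial_of_neZero [SigmaFinite μ] [NeZero μ] : Nontrivial (Lp 𝕜 p μ) := by
  obtain ⟨n, hn⟩ : ∃ n, 0 < μ (spanningSets μ n) :=
    exists_measure_pos_of_not_measure_iUnion_null (by simpa using NeZero.ne μ)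
  have hμn : μ (spanningSets μ n) ≠ ∞ := (measure_spanningSets_lt_top μ n).ne
  refine nontrivial_of_ne (indicatorConstLp p (measurableSet_spanningSets μ n) hμn (1 : 𝕜)) 0
    (norm_pos_iff.1 ?_)
  rw [norm_indicatorConstLp' (zero_lt_one.trans_le Fact.out).ne' hn.ne', norm_one, one_mul,
    measureReal_def]
  exact Real.rpow_pos_of_pos (ENNReal.toReal_pos hn.ne' hμn) _

variable [hp : Fact (p ≠ ∞)]

section SFinite

variable [SFinite ν]

noncomputable def tensor (g : Lp 𝕜 p μ) (H : Lp E p ν) : Lp E p (μ.prod ν) :=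
  ((Lp.memLp g).smul_prod (zero_lt_one.trans_le Fact.out).ne' hp.out (Lp.memLp H)).toLp _

theorem coeFn_tensor (g : Lp 𝕜 p μ) (H : Lp E p ν) :
    tensor g H =ᵐ[μ.prod ν] fun q ↦ g q.1 • H q.2 :=
  MemLp.coeFn_toLp _

theorem eq_tensor_of_ae_eq {g : Lp 𝕜 p μ} {H : Lp E p ν} {K : Lp E p (μ.prod ν)}
    (hK : K =ᵐ[μ.prod ν] fun q ↦ g q.1 • H q.2) : K = tensor g H :=
  Lp.ext (hK.trans (coeFn_tensor g H).symm)

theorem norm_tensor (g : Lp 𝕜 p μ) (H : Lp E p ν) : ‖tensor g H‖ = ‖g‖ * ‖H‖ := by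
  rw [tensor, norm_toLp, eLpNorm_smul_prod (zero_lt_one.trans_le Fact.out).ne' hp.out
    (Lp.aestronglyMeasurable g) (Lp.aestronglyMeasurable H), ENNReal.toReal_mul, norm_def,
    norm_def]

theorem tensor_add_left (g g' : Lp 𝕜 p μ) (H : Lp E p ν) :
    tensor (g + g') H = tensor g H + tensor g' H := by
  refine Lp.ext ?_
  filter_upwards [coeFn_tensor (g + g') H, Lp.coeFn_add (tensor g H) (tensor g' H),
    coeFn_tensor g H, coeFn_tensor g' H,
    Measure.quasiMeasurePreserving_fst.ae_eq_comp (Lp.coeFn_add g g')] with q h h₁ h₂ h₃ h₄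
  simp_all [add_smul]

theorem tensor_smul_left (c : 𝕜) (g : Lp 𝕜 p μ) (H : Lp E p ν) :
    tensor (c • g) H = c • tensor g H := by
  refine Lp.ext ?_
  filter_upwards [coeFn_tensor (c • g) H, Lp.coeFn_smul c (tensor g H), coeFn_tensor g H,
    Measure.quasiMeasurePreserving_fst.ae_eq_comp (Lp.coeFn_smul c g)] with q h h₁ h₂ h₃
  simp_all [smul_smul]

theorem tensor_add_right (g : Lp 𝕜 p μ) (H H' : Lp E p ν) :
    tensor g (H + H') = tensor g H + tensor g H' := by
  refine Lp.ext ?_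
  filter_upwards [coeFn_tensor g (H + H'), Lp.coeFn_add (tensor g H) (tensor g H'),
    coeFn_tensor g H, coeFn_tensor g H',
    Measure.quasiMeasurePreserving_snd.ae_eq_comp (Lp.coeFn_add H H')] with q h h₁ h₂ h₃ h₄
  simp_all

theorem tensor_smul_right (c : 𝕜) (g : Lp 𝕜 p μ) (H : Lp E p ν) :
    tensor g (c • H) = c • tensor g H := by
  refine Lp.ext ?_
  filter_upwards [coeFn_tensor g (c • H), Lp.coeFn_smul c (tensor g H), coeFn_tensor g H,
    Measure.quasiMeasurePreserving_snd.ae_eq_comp (Lp.coeFn_smul c H)] with q h h₁ h₂ h₃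
  simp_all [smul_comm c]

variable (𝕜 E p μ ν) in
noncomputable def tensorLift : Lp 𝕜 p μ ⊗[𝕜] Lp E p ν →ₗ[𝕜] Lp E p (μ.prod ν) :=
  TensorProduct.lift <| LinearMap.mk₂ 𝕜 tensor tensor_add_left tensor_smul_left
    tensor_add_right tensor_smul_right

@[simp]
theorem tensorLift_tmul (g : Lp 𝕜 p μ) (H : Lp E p ν) :
    tensorLift 𝕜 E p μ ν (g ⊗ₜ H) = tensor g H :=
  rfl

theorem enorm_sum_tensor_rpow {ι : Type*} (S : Finset ι) (g : ι → Lp 𝕜 p μ)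
    (H : ι → Lp E p ν) :
    ‖∑ i ∈ S, tensor (g i) (H i)‖ₑ ^ p.toReal = ∫⁻ s, ‖∑ i ∈ S, g i s • H i‖ₑ ^ p.toReal ∂μ := by
  have hp0 : p ≠ 0 := (zero_lt_one.trans_le Fact.out).ne'
  have hF : AEStronglyMeasurable (fun q : α × β ↦ ∑ i ∈ S, g i q.1 • H i q.2) (μ.prod ν) :=
    Finset.aestronglyMeasurable_fun_sum S fun i _ ↦
      (Lp.aestronglyMeasurable (g i)).comp_fst.smul (Lp.aestronglyMeasurable (H i)).comp_snd
  have hsum : ⇑(∑ i ∈ S, tensor (g i) (H i)) =ᵐ[μ.prod ν] fun q ↦ ∑ i ∈ S, g i q.1 • H i q.2 := by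
    filter_upwards [coeFn_fun_finsetSum S fun i ↦ tensor (g i) (H i),
      (Filter.eventually_all_finset S).2 fun i _ ↦ coeFn_tensor (g i) (H i)] with q hq hq'
    rw [hq]
    exact Finset.sum_congr rfl hq'
  rw [enorm_def, eLpNorm_congr_ae hsum, eLpNorm_rpow_prod_eq_lintegral hp0 hp.out hF]
  refine lintegral_congr fun s ↦ ?_
  rw [enorm_def]
  congr 1
  refine eLpNorm_congr_ae ?_
  filter_upwards [coeFn_fun_finsetSum S fun i ↦ g i s • H i,
    (Filter.eventually_all_finset S).2 fun i _ ↦ coeFn_smul (g i s) (H i)] with t ht ht'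
  rw [ht]
  exact Finset.sum_congr rfl fun i hi ↦ (ht' i hi).symm

theorem norm_tensorLift_lTensor_le (W : Lp E p ν →L[𝕜] Lp E p ν)
    (x : Lp 𝕜 p μ ⊗[𝕜] Lp E p ν) :
    ‖tensorLift 𝕜 E p μ ν (W.toLinearMap.lTensor _ x)‖ ≤ ‖W‖ * ‖tensorLift 𝕜 E p μ ν x‖ := by
  have hp' : 0 < p.toReal := ENNReal.toReal_pos (zero_lt_one.trans_le Fact.out).ne' hp.out
  obtain ⟨S, rfl⟩ := TensorProduct.exists_finset x
  simp only [map_sum, LinearMap.lTensor_tmul, ContinuousLinearMap.coe_coe, tensorLift_tmul]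
  suffices h : ‖∑ i ∈ S, tensor i.1 (W i.2)‖ₑ ^ p.toReal ≤
      (‖W‖ₑ * ‖∑ i ∈ S, tensor i.1 i.2‖ₑ) ^ p.toReal by
    rw [ENNReal.rpow_le_rpow_iff hp', ← ofReal_norm, ← ofReal_norm, ← ofReal_norm,
      ← ENNReal.ofReal_mul (norm_nonneg _)] at h
    exact (ENNReal.ofReal_le_ofReal_iff (by positivity)).1 h
  rw [ENNReal.mul_rpow_of_nonneg _ _ hp'.le, enorm_sum_tensor_rpow, enorm_sum_tensor_rpow,
    ← lintegral_const_mul' _ _ (by finiteness)]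
  refine lintegral_mono fun s ↦ ?_
  rw [← ENNReal.mul_rpow_of_nonneg _ _ hp'.le]
  gcongr
  simpa only [map_sum, map_smul] using W.le_opENorm (∑ i ∈ S, i.1 s • i.2)

theorem tensor_indicatorConstLp_one {A : Set α} {B : Set β} (hA : MeasurableSet A)
    (hB : MeasurableSet B) (hμA : μ A ≠ ∞) (hνB : ν B ≠ ∞) (hAB : (μ.prod ν) (A ×ˢ B) ≠ ∞)
    (c : E) :
    tensor (indicatorConstLp p hA hμA (1 : 𝕜)) (indicatorConstLp p hB hνB c) =
      indicatorConstLp p (hA.prod hB) hAB c := by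
  refine Lp.ext ?_
  filter_upwards [coeFn_tensor (indicatorConstLp p hA hμA (1 : 𝕜)) (indicatorConstLp p hB hνB c),
    Measure.quasiMeasurePreserving_fst.ae_eq_comp
      (indicatorConstLp_coeFn (hs := hA) (c := (1 : 𝕜))),
    Measure.quasiMeasurePreserving_snd.ae_eq_comp (indicatorConstLp_coeFn (hs := hB) (c := c)),
    indicatorConstLp_coeFn (hs := hA.prod hB) (hμs := hAB) (c := c)] with q h h₁ h₂ h₃
  simp only [Function.comp_apply] at h₁ h₂
  rw [h, h₁, h₂, h₃]
  by_cases hq₁ : q.1 ∈ A <;> by_cases hq₂ : q.2 ∈ B <;> simp [Set.indicator, hq₁, hq₂]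

end SFinite

section SigmaFinite

variable [SigmaFinite μ] [SigmaFinite ν]

theorem denseRange_tensorLift : DenseRange (tensorLift 𝕜 E p μ ν) := by
  let V := (LinearMap.range (tensorLift 𝕜 E p μ ν)).topologicalClosure
  suffices hV : V.toAddSubgroup = ⊤ by
    rw [DenseRange, ← LinearMap.coe_range, Submodule.dense_iff_topologicalClosure_eq_top]
    exact Submodule.toAddSubgroup_eq_top.1 hV
  refine eq_top_of_prod_mem_indicatorSetsIn hp.out (Submodule.isClosed_topologicalClosure _)
    fun A B hA hB hμA hνB ↦ ?_
  have hAB : (μ.prod ν) (A ×ˢ B) ≠ ∞ := by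
    rw [Measure.prod_prod]
    exact ENNReal.mul_ne_top hμA hνB
  refine ⟨hA.prod hB, hAB, fun c ↦ Submodule.le_topologicalClosure _ ?_⟩
  rw [← tensor_indicatorConstLp_one (𝕜 := 𝕜) hA hB hμA hνB hAB c]
  exact ⟨_, tensorLift_tmul _ _⟩

variable [CompleteSpace E] (μ) (W : Lp E p ν →L[𝕜] Lp E p ν)

noncomputable def lTensor : Lp E p (μ.prod ν) →L[𝕜] Lp E p (μ.prod ν) :=
  ((tensorLift 𝕜 E p μ ν).comp (W.toLinearMap.lTensor _)).extendOfNorm (tensorLift 𝕜 E p μ ν)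

variable {μ}

theorem lTensor_tensor (g : Lp 𝕜 p μ) (H : Lp E p ν) :
    lTensor μ W (tensor g H) = tensor g (W H) := by
  have h := LinearMap.extendOfNorm_eq
    (f := (tensorLift 𝕜 E p μ ν).comp (W.toLinearMap.lTensor _)) denseRange_tensorLift
    ⟨‖W‖, norm_tensorLift_lTensor_le W⟩ (g ⊗ₜ H)
  simp only [LinearMap.comp_apply, LinearMap.lTensor_tmul, tensorLift_tmul,
    ContinuousLinearMap.coe_coe] at h
  exact h

theorem eq_lTensor {W' : Lp E p (μ.prod ν) →L[𝕜] Lp E p (μ.prod ν)}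
    (hW' : ∀ (g : Lp 𝕜 p μ) (H : Lp E p ν), W' (tensor g H) = tensor g (W H)) :
    W' = lTensor μ W := by
  refine (LinearMap.extendOfNorm_unique
    (f := (tensorLift 𝕜 E p μ ν).comp (W.toLinearMap.lTensor _)) denseRange_tensorLift ‖W‖
    (norm_tensorLift_lTensor_le W) W' (TensorProduct.ext' fun g H ↦ ?_)).symm
  simp [hW']

theorem opNorm_lTensor_le : ‖lTensor μ W‖ ≤ ‖W‖ :=
  LinearMap.opNorm_extendOfNorm_le (f := (tensorLift 𝕜 E p μ ν).comp (W.toLinearMap.lTensor _))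
    denseRange_tensorLift (norm_nonneg W) (norm_tensorLift_lTensor_le W)

theorem opNorm_lTensor [NeZero μ] : ‖lTensor μ W‖ = ‖W‖ := by
  have := nontrivial_of_neZero (𝕜 := 𝕜) (p := p) (μ := μ)
  obtain ⟨g, hg⟩ := exists_ne (0 : Lp 𝕜 p μ)
  refine le_antisymm (opNorm_lTensor_le W) (W.opNorm_le_bound (norm_nonneg _) fun H ↦ ?_)
  refine le_of_mul_le_mul_right ?_ (norm_pos_iff.2 hg)
  calc ‖W H‖ * ‖g‖ = ‖lTensor μ W (tensor g H)‖ := by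
        rw [lTensor_tensor, norm_tensor, mul_comm]
    _ ≤ ‖lTensor μ W‖ * ‖H‖ * ‖g‖ := by
        rw [mul_assoc, mul_comm ‖H‖, ← norm_tensor]
        exact (lTensor μ W).le_opNorm _

end SigmaFinite

end Lp

end Tensor

end MeasureTheory

/-- Let `X` be a σ-finite measure space and `E` a complex Banach space.
(i) For `g ∈ L²(X)` and `H ∈ L²(X, E)`, the function `(s, t) ↦ g(s) • H(t)` defines an
element `g⊠H` of `L²(X×X, E)` with `‖g⊠H‖ = ‖g‖ ‖H‖`.
(ii) For every bounded operator `W` on `L²(X, E)` there is a unique bounded operator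
`W₂₃` on `L²(X×X, E)` with `W₂₃(g⊠H) = g⊠(W H)` for all `g, H`; moreover
`‖W₂₃‖ = ‖W‖`. -/
theorem leg_numbering_23
    {X : Type*} [MeasurableSpace X] (m : Measure X) [SigmaFinite m]
    {E : Type*} [NormedAddCommGroup E] [NormedSpace ℂ E] [CompleteSpace E] :
    (∀ (g : Lp ℂ 2 m) (H : Lp E 2 m),
      ∃ K : Lp E 2 (m.prod m),
        (K =ᵐ[m.prod m] (fun q => g q.1 • H q.2)) ∧ ‖K‖ = ‖g‖ * ‖H‖) ∧
    (∀ W : Lp E 2 m →L[ℂ] Lp E 2 m,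
      ∃ W23 : Lp E 2 (m.prod m) →L[ℂ] Lp E 2 (m.prod m),
        (∀ (g : Lp ℂ 2 m) (H : Lp E 2 m) (K K' : Lp E 2 (m.prod m)),
          K =ᵐ[m.prod m] (fun q => g q.1 • H q.2) →
          K' =ᵐ[m.prod m] (fun q => g q.1 • (W H) q.2) →
          W23 K = K') ∧
        ‖W23‖ = ‖W‖ ∧
        ∀ W23' : Lp E 2 (m.prod m) →L[ℂ] Lp E 2 (m.prod m),
          (∀ (g : Lp ℂ 2 m) (H : Lp E 2 m) (K K' : Lp E 2 (m.prod m)),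
            K =ᵐ[m.prod m] (fun q => g q.1 • H q.2) →
            K' =ᵐ[m.prod m] (fun q => g q.1 • (W H) q.2) →
            W23' K = K') →
          W23' = W23) := by
  have : Fact ((2 : ℝ≥0∞) ≠ ∞) := ⟨ENNReal.ofNat_ne_top⟩
  refine ⟨fun g H ↦ ⟨Lp.tensor g H, Lp.coeFn_tensor g H, Lp.norm_tensor g H⟩,
    fun W ↦ ⟨Lp.lTensor m W, fun g H K K' hK hK' ↦ ?_, ?_, fun W' hW' ↦ ?_⟩⟩
  · rw [Lp.eq_tensor_of_ae_eq hK, Lp.eq_tensor_of_ae_eq hK', Lp.lTensor_tensor]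
  · obtain rfl | _ := eq_zero_or_neZero m
    · obtain rfl : W = 0 := ContinuousLinearMap.ext fun H ↦ Lp.ext (by simp [Filter.EventuallyEq])
      simpa using Lp.opNorm_lTensor_le (0 : Lp E 2 (0 : Measure X) →L[ℂ] Lp E 2 (0 : Measure X))
    · exact Lp.opNorm_lTensor W
  · exact Lp.eq_lTensor W fun g H ↦ hW' g H _ _ (Lp.coeFn_tensor g H) (Lp.coeFn_tensor g (W H))
end
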